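/- The MLP objective J is twice Fréchet differentiable at every u ∈ ℂ^N (ℂ^N regarded as a real normed space), and its second derivative, as a real-bilinear form, is D²J(u)(p, q) = 2 Re⟨ℋ_u(q), p⟩ for all p, q ∈ ℂ^N, where ℋ_u(h) = U*(a(u) ∘ (Uh)) + U*(b(u) ∘ conj(Uh)), with a(u)_i = 1 − ε² I_i/(|(Uu)_i|² + ε²)², b(u)_i = I_i (Uu)_i²/(|(Uu)_i|² + ε²)², ∘ denoting entrywise product, conj entrywise complex conjugation, and ⟨x, y⟩ = Σᵢ x̄ᵢ yᵢ. -/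

import Mathlib

/-- The MLP objective `J(u) = Σᵢ (|(Uu)ᵢ|² − Iᵢ log(|(Uu)ᵢ|² + ε²))`. -/
noncomputable def mlpObj {N : ℕ} (U : Matrix (Fin N) (Fin N) ℂ)
    (I : Fin N → ℝ) (ε : ℝ) (u : EuclideanSpace ℂ (Fin N)) : ℝ :=
  ∑ i : Fin N,
    (‖U.mulVec u i‖ ^ 2 -
      I i * Real.log (‖U.mulVec u i‖ ^ 2 + ε ^ 2))

/-- The MLP Hessian operator `ℋ_u(h) = U*(a(u) ∘ (Uh)) + U*(b(u) ∘ conj(Uh))`,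
with `a(u)ᵢ = 1 − ε² Iᵢ/(|(Uu)ᵢ|²+ε²)²` and `b(u)ᵢ = Iᵢ (Uu)ᵢ²/(|(Uu)ᵢ|²+ε²)²`. -/
noncomputable def mlpHessOp {N : ℕ} (U : Matrix (Fin N) (Fin N) ℂ)
    (I : Fin N → ℝ) (ε : ℝ) (u h : EuclideanSpace ℂ (Fin N)) :
    EuclideanSpace ℂ (Fin N) :=
  WithLp.toLp 2 <| (star U).mulVec fun i =>
    ((1 - ε ^ 2 * I i / (‖U.mulVec u i‖ ^ 2 + ε ^ 2) ^ 2 : ℝ) : ℂ) *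
        U.mulVec h i +
      (I i : ℂ) * (U.mulVec u i) ^ 2 /
          (((‖U.mulVec u i‖ ^ 2 + ε ^ 2) ^ 2 : ℝ) : ℂ) *
        star (U.mulVec h i)

namespace MLP17

/-- `w ↦ (Uw)ᵢ` as a real continuous linear map. -/
noncomputable def Lc {N : ℕ} (U : Matrix (Fin N) (Fin N) ℂ) (i : Fin N) :
    EuclideanSpace ℂ (Fin N) →L[ℝ] ℂ :=
  LinearMap.toContinuousLinearMap
    { toFun := fun u => U.mulVec u i
      map_add' := fun x y => by
        show U.mulVec (x + y) i = _
        rw [Matrix.mulVec_add]; rfl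
      map_smul' := fun r x => by
        show U.mulVec (r • x) i = _
        rw [Matrix.mulVec_smul]; rfl }

@[simp] lemma Lc_apply {N : ℕ} (U : Matrix (Fin N) (Fin N) ℂ) (i : Fin N)
    (w : EuclideanSpace ℂ (Fin N)) : Lc U i w = U.mulVec w i := rfl

/-- `w ↦ 2⟪z, (Uw)ᵢ⟫_ℝ` as a real continuous linear functional. -/
noncomputable def Bc {N : ℕ} (U : Matrix (Fin N) (Fin N) ℂ) (i : Fin N)
    (z : ℂ) : EuclideanSpace ℂ (Fin N) →L[ℝ] ℝ :=
  2 • (innerSL ℝ z).comp (Lc U i)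

@[simp] lemma Bc_apply {N : ℕ} (U : Matrix (Fin N) (Fin N) ℂ) (i : Fin N) (z : ℂ)
    (w : EuclideanSpace ℂ (Fin N)) :
    Bc U i z w = 2 * (inner ℝ z (U.mulVec w i) : ℝ) := by
  simp [Bc, two_smul, two_mul]

lemma real_inner_complex (x y : ℂ) : (inner ℝ x y : ℝ) = (starRingEnd ℂ x * y).re := by
  rw [Complex.inner, mul_comm]

variable {N : ℕ} (U : Matrix (Fin N) (Fin N) ℂ) (I : Fin N → ℝ) (ε : ℝ)

/-- Explicit first derivative of the MLP objective. -/
noncomputable def D1 (u : EuclideanSpace ℂ (Fin N)) :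
    EuclideanSpace ℂ (Fin N) →L[ℝ] ℝ :=
  ∑ i, (1 - I i / (‖U.mulVec u i‖ ^ 2 + ε ^ 2)) • Bc U i (U.mulVec u i)

lemma mlpObj_eq :
    mlpObj U I ε = fun w : EuclideanSpace ℂ (Fin N) => ∑ i,
      (‖U.mulVec w i‖ ^ 2 - I i * Real.log (‖U.mulVec w i‖ ^ 2 + ε ^ 2)) := by
  funext w
  simp [mlpObj]

lemma hasFDerivAt_normsq (i : Fin N) (u : EuclideanSpace ℂ (Fin N)) :
    HasFDerivAt (fun w : EuclideanSpace ℂ (Fin N) => ‖U.mulVec w i‖ ^ 2)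
      (Bc U i (U.mulVec u i)) u :=
  ((Lc U i).hasFDerivAt (x := u)).norm_sq

lemma hasFDerivAt_mlpObj (hε : 0 < ε) (u : EuclideanSpace ℂ (Fin N)) :
    HasFDerivAt (mlpObj U I ε) (D1 U I ε u) u := by
  rw [mlpObj_eq]
  apply HasFDerivAt.fun_sum
  intro i _
  have hs : ‖U.mulVec u i‖ ^ 2 + ε ^ 2 ≠ 0 := by positivity
  have h1 := hasFDerivAt_normsq U i u
  have h2 := h1.add_const (ε ^ 2)
  have h3 := h2.log hs
  have h4 := h1.fun_sub (h3.const_mul (I i))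
  convert h4 using 1
  ext w
  simp only [ContinuousLinearMap.smul_apply, ContinuousLinearMap.sub_apply,
    smul_eq_mul]
  field_simp

lemma contDiff_mlpObj (hε : 0 < ε) : ContDiff ℝ 2 (mlpObj U I ε) := by
  rw [mlpObj_eq]
  apply ContDiff.sum
  intro i _
  have hL : ContDiff ℝ 2 (fun w : EuclideanSpace ℂ (Fin N) => U.mulVec w i) :=
    (Lc U i).contDiff
  have h1 : ContDiff ℝ 2 (fun w : EuclideanSpace ℂ (Fin N) => ‖U.mulVec w i‖ ^ 2) :=
    hL.norm_sq (𝕜 := ℂ)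
  have h2 : ContDiff ℝ 2
      (fun w : EuclideanSpace ℂ (Fin N) => ‖U.mulVec w i‖ ^ 2 + ε ^ 2) :=
    h1.add contDiff_const
  have hne : ∀ w : EuclideanSpace ℂ (Fin N), ‖U.mulVec w i‖ ^ 2 + ε ^ 2 ≠ 0 :=
    fun w => by positivity
  exact h1.sub (contDiff_const.mul (h2.log hne))

/-- Explicit second derivative (in direction `q`, as a functional). -/
noncomputable def D2q (u q : EuclideanSpace ℂ (Fin N)) :
    EuclideanSpace ℂ (Fin N) →L[ℝ] ℝ :=
  ∑ i, ((1 - I i / (‖U.mulVec u i‖ ^ 2 + ε ^ 2)) • Bc U i (U.mulVec q i)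
    + (2 * (inner ℝ (U.mulVec u i) (U.mulVec q i) : ℝ)) •
        ((I i / (‖U.mulVec u i‖ ^ 2 + ε ^ 2) ^ 2) • Bc U i (U.mulVec u i)))

lemma D1_apply (u q : EuclideanSpace ℂ (Fin N)) :
    D1 U I ε u q = ∑ i, (1 - I i / (‖U.mulVec u i‖ ^ 2 + ε ^ 2)) *
      (2 * (inner ℝ (U.mulVec u i) (U.mulVec q i) : ℝ)) := by
  simp [D1]

lemma hasFDerivAt_D1q (hε : 0 < ε) (u q : EuclideanSpace ℂ (Fin N)) :
    HasFDerivAt (fun w => D1 U I ε w q) (D2q U I ε u q) u := by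
  have hrw : (fun w => D1 U I ε w q) = fun w : EuclideanSpace ℂ (Fin N) => ∑ i,
      (1 - I i / (‖U.mulVec w i‖ ^ 2 + ε ^ 2)) *
        (2 * (inner ℝ (U.mulVec w i) (U.mulVec q i) : ℝ)) := by
    funext w; rw [D1_apply]
  rw [hrw]
  apply HasFDerivAt.fun_sum
  intro i _
  have hs : ‖U.mulVec u i‖ ^ 2 + ε ^ 2 ≠ 0 := by positivity
  have h1 := hasFDerivAt_normsq U i u
  have h2 := h1.add_const (ε ^ 2)
  have hdiv : HasDerivAt (fun t : ℝ => 1 - I i / t)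
      (I i / (‖U.mulVec u i‖ ^ 2 + ε ^ 2) ^ 2) (‖U.mulVec u i‖ ^ 2 + ε ^ 2) := by
    have h := ((hasDerivAt_const (‖U.mulVec u i‖ ^ 2 + ε ^ 2) (I i)).div
      (hasDerivAt_id (‖U.mulVec u i‖ ^ 2 + ε ^ 2)) hs).const_sub 1
    refine h.congr_deriv ?_
    simp [neg_div]
  have hf : HasFDerivAt
      (fun w : EuclideanSpace ℂ (Fin N) => 1 - I i / (‖U.mulVec w i‖ ^ 2 + ε ^ 2))
      ((I i / (‖U.mulVec u i‖ ^ 2 + ε ^ 2) ^ 2) • Bc U i (U.mulVec u i)) u :=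
    hdiv.comp_hasFDerivAt (f := fun w : EuclideanSpace ℂ (Fin N) => ‖U.mulVec w i‖ ^ 2 + ε ^ 2) u h2
  have hg : HasFDerivAt
      (fun w : EuclideanSpace ℂ (Fin N) =>
        2 * (inner ℝ (U.mulVec w i) (U.mulVec q i) : ℝ))
      (Bc U i (U.mulVec q i)) u := by
    have heq : (fun w : EuclideanSpace ℂ (Fin N) =>
        2 * (inner ℝ (U.mulVec w i) (U.mulVec q i) : ℝ))
        = fun w => Bc U i (U.mulVec q i) w := by
      funext w
      rw [Bc_apply, real_inner_comm]
    rw [heq]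
    exact (Bc U i (U.mulVec q i)).hasFDerivAt
  exact hf.mul hg

/-- The per-index scalar identity behind the Hessian formula. -/
lemma scalar_id (hε : 0 < ε) (c : ℝ) (v z w : ℂ) (s : ℝ)
    (hs : Complex.normSq v + ε ^ 2 = s) :
    (1 - c / s) * (2 * ((starRingEnd ℂ z * w).re)) +
      (2 * ((starRingEnd ℂ v * z).re)) * (c / s ^ 2 * (2 * ((starRingEnd ℂ v * w).re)))
    = 2 * ((starRingEnd ℂ
        (((1 - ε ^ 2 * c / s ^ 2 : ℝ) : ℂ) * z +
          (c : ℂ) * v ^ 2 / ((s ^ 2 : ℝ) : ℂ) * starRingEnd ℂ z) * w).re) := by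
  have hs0 : s ≠ 0 := by
    rw [← hs]
    have := Complex.normSq_nonneg v
    positivity
  have hb : (c : ℂ) * v ^ 2 / ((s ^ 2 : ℝ) : ℂ)
      = ((c / s ^ 2 : ℝ) : ℂ) * v ^ 2 := by
    push_cast
    field_simp
  rw [hb]
  obtain ⟨a, b⟩ := v
  obtain ⟨x, y⟩ := z
  obtain ⟨g, h⟩ := w
  rw [Complex.normSq_mk] at hs
  have key : c / s = c * (a * a + b * b + ε ^ 2) / s ^ 2 := by
    rw [hs, pow_two]
    field_simp
  rw [key]
  simp only [pow_two, Complex.mul_re, Complex.mul_im,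
    Complex.add_re, Complex.add_im, Complex.conj_re, Complex.conj_im,
    Complex.ofReal_re, Complex.ofReal_im]
  field_simp
  ring

lemma inner_hess (Z : Fin N → ℂ) (H p : EuclideanSpace ℂ (Fin N))
    (hH : ∀ i, H i = (star U).mulVec Z i) :
    (inner ℂ H p : ℂ) = ∑ j, starRingEnd ℂ (Z j) * U.mulVec p j := by
  simp only [PiLp.inner_apply, RCLike.inner_apply, hH]
  have h1 : ∀ i, (starRingEnd ℂ) ((star U).mulVec Z i)
      = ∑ j, U j i * starRingEnd ℂ (Z j) := by
    intro i
    simp [Matrix.mulVec, dotProduct, map_sum, Matrix.star_apply]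
  simp only [h1, Finset.mul_sum]
  rw [Finset.sum_comm]
  simp only [Matrix.mulVec, dotProduct, Finset.mul_sum]
  congr 1; funext j; congr 1; funext i; ring

lemma D2q_eq (hε : 0 < ε) (u p q : EuclideanSpace ℂ (Fin N)) :
    D2q U I ε u q p = 2 * (inner ℂ (mlpHessOp U I ε u q) p : ℂ).re := by
  rw [inner_hess U (fun i =>
      ((1 - ε ^ 2 * I i / (‖U.mulVec u i‖ ^ 2 + ε ^ 2) ^ 2 : ℝ) : ℂ) *
        U.mulVec q i +
      (I i : ℂ) * (U.mulVec u i) ^ 2 /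
          (((‖U.mulVec u i‖ ^ 2 + ε ^ 2) ^ 2 : ℝ) : ℂ) *
        star (U.mulVec q i)) (mlpHessOp U I ε u q) p (fun i => rfl)]
  rw [Complex.re_sum, Finset.mul_sum]
  have hD2 : D2q U I ε u q p = ∑ i,
      ((1 - I i / (‖U.mulVec u i‖ ^ 2 + ε ^ 2)) *
        (2 * (inner ℝ (U.mulVec q i) (U.mulVec p i) : ℝ))
      + (2 * (inner ℝ (U.mulVec u i) (U.mulVec q i) : ℝ)) *
          ((I i / (‖U.mulVec u i‖ ^ 2 + ε ^ 2) ^ 2) *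
            (2 * (inner ℝ (U.mulVec u i) (U.mulVec p i) : ℝ)))) := by
    simp [D2q, mul_assoc]
  rw [hD2]
  refine Finset.sum_congr rfl fun i _ => ?_
  have hstar : star (U.mulVec q i) = starRingEnd ℂ (U.mulVec q i) := rfl
  rw [hstar]
  simp only [real_inner_complex]
  exact scalar_id ε hε (I i) (U.mulVec u i) (U.mulVec q i) (U.mulVec p i)
    (‖U.mulVec u i‖ ^ 2 + ε ^ 2)
    (by simp [Complex.normSq_eq_norm_sq])

end MLP17

/-- the MLP objective is twice Fréchet differentiable (over `ℝ`)
at every `u`, and its second derivative is the real-bilinear form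
`(p, q) ↦ 2 Re⟪ℋ_u(q), p⟫`. -/
theorem mlpObj_second_derivative {N : ℕ} (hN : 0 < N)
    (U : Matrix (Fin N) (Fin N) ℂ) (hU : star U * U = 1 ∧ U * star U = 1)
    (I : Fin N → ℝ) (hI : ∀ i, 0 ≤ I i) (ε : ℝ) (hε : 0 < ε) :
    Differentiable ℝ (mlpObj U I ε) ∧
    ∀ u : EuclideanSpace ℂ (Fin N),
      ∃ D : EuclideanSpace ℂ (Fin N) →L[ℝ] EuclideanSpace ℂ (Fin N) →L[ℝ] ℝ,
        HasFDerivAt (fderiv ℝ (mlpObj U I ε)) D u ∧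
        ∀ p q : EuclideanSpace ℂ (Fin N),
          D p q = 2 * (inner ℂ (mlpHessOp U I ε u q) p : ℂ).re := by
  constructor
  · exact fun u => (MLP17.hasFDerivAt_mlpObj U I ε hε u).differentiableAt
  · intro u
    have hC1 : ContDiff ℝ 1 (fderiv ℝ (mlpObj U I ε)) :=
      (MLP17.contDiff_mlpObj U I ε hε).fderiv_right (m := 1) (by norm_num)
    have hD : HasFDerivAt (fderiv ℝ (mlpObj U I ε))
        (fderiv ℝ (fderiv ℝ (mlpObj U I ε)) u) u :=
      ((hC1.differentiable (by norm_num)) u).hasFDerivAt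
    refine ⟨_, hD, ?_⟩
    intro p q
    have hq : HasFDerivAt (fun w => fderiv ℝ (mlpObj U I ε) w q)
        ((ContinuousLinearMap.apply ℝ ℝ q).comp
          (fderiv ℝ (fderiv ℝ (mlpObj U I ε)) u)) u :=
      (ContinuousLinearMap.apply ℝ ℝ q).hasFDerivAt.comp u hD
    have heq : (fun w => fderiv ℝ (mlpObj U I ε) w q)
        = fun w => MLP17.D1 U I ε w q :=
      funext fun w => by rw [(MLP17.hasFDerivAt_mlpObj U I ε hε w).fderiv]
    rw [heq] at hq
    have h2 := MLP17.hasFDerivAt_D1q U I ε hε u q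
    have hDeq := hq.unique h2
    have hval : fderiv ℝ (fderiv ℝ (mlpObj U I ε)) u p q = MLP17.D2q U I ε u q p := by
      rw [← hDeq]; rfl
    rw [hval]
    exact MLP17.D2q_eq U I ε hε u p q
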